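/- Let f : ℍ^{N×S} → ℝ be ℝ-differentiable at Q. Then for every direction matrix H ∈ ℍ^{N×S}, the real Fréchet derivative of f at Q applied to H satisfies Df(Q)[H] = 4 · Re( Σ_{n,s} (∂f/∂q_{ns})(Q) · H_{ns} ) = 4 · Re( Σ_{n,s} ((∂f/∂q_{ns}^{*})(Q))^{*} · H_{ns} ). -/

import Mathlib

open scoped Quaternion

noncomputable section

/-- The imaginary unit `i` of the quaternions. -/
def qI : ℍ[ℝ] := ⟨0, 1, 0, 0⟩
/-- The imaginary unit `j` of the quaternions. -/
def qJ : ℍ[ℝ] := ⟨0, 0, 1, 0⟩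
/-- The imaginary unit `k` of the quaternions. -/
def qK : ℍ[ℝ] := ⟨0, 0, 0, 1⟩

/-- The `N × S` quaternion matrix with entry `d` at position `(n,s)` and `0` elsewhere. -/
def single {N S : ℕ} (n : Fin N) (s : Fin S) (d : ℍ[ℝ]) : Fin N → Fin S → ℍ[ℝ] :=
  Pi.single n (Pi.single s d)

/-- Real directional (Fréchet) derivative of a real-valued function of a matrix variable, in
the direction `d` at the single entry `(n,s)` (the other entries held fixed). -/
def pdR {N S : ℕ} (f : (Fin N → Fin S → ℍ[ℝ]) → ℝ) (Q : Fin N → Fin S → ℍ[ℝ])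
    (n : Fin N) (s : Fin S) (d : ℍ[ℝ]) : ℝ :=
  fderiv ℝ f Q (single n s d)

/-- Left GHR derivative `∂f/∂q_{ns}^ν` of a real-valued function `f` with respect to the entry
`q_{ns}`: `¼(∂f/∂q_a − (∂f/∂q_b) i^ν − (∂f/∂q_c) j^ν − (∂f/∂q_d) k^ν)`, `x^ν = ν x ν⁻¹`. -/
def ghrER {N S : ℕ} (ν : ℍ[ℝ]) (f : (Fin N → Fin S → ℍ[ℝ]) → ℝ)
    (Q : Fin N → Fin S → ℍ[ℝ]) (n : Fin N) (s : Fin S) : ℍ[ℝ] :=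
  (1 / 4 : ℝ) • ((pdR f Q n s 1) • (1 : ℍ[ℝ]) - (pdR f Q n s qI) • (ν * qI * ν⁻¹)
    - (pdR f Q n s qJ) • (ν * qJ * ν⁻¹) - (pdR f Q n s qK) • (ν * qK * ν⁻¹))

/-- Conjugate left GHR derivative `∂f/∂q_{ns}^{ν*}` of a real-valued function `f`. -/
def ghrStarER {N S : ℕ} (ν : ℍ[ℝ]) (f : (Fin N → Fin S → ℍ[ℝ]) → ℝ)
    (Q : Fin N → Fin S → ℍ[ℝ]) (n : Fin N) (s : Fin S) : ℍ[ℝ] :=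
  (1 / 4 : ℝ) • ((pdR f Q n s 1) • (1 : ℍ[ℝ]) + (pdR f Q n s qI) • (ν * qI * ν⁻¹)
    + (pdR f Q n s qJ) • (ν * qJ * ν⁻¹) + (pdR f Q n s qK) • (ν * qK * ν⁻¹))

/-!
A real linear functional `L` on `ℍ` is `h ↦ Re(g h)` with `g = L 1 - L(i) i - L(j) j - L(k) k`,
since `Re(x y)` is the Euclidean inner product of `x*` and `y`. For the partial differential of
`f` in the entry `q_{ns}` this `g` is `4 ∂f/∂q_{ns}`; summing over the entries gives the first
formula, and the second follows from `(∂f/∂q_{ns}^*)^* = ∂f/∂q_{ns}` for real-valued `f`.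
-/

theorem Quaternion.re_sum {R ι : Type*} [CommRing R] (t : Finset ι) (g : ι → ℍ[R]) :
    (∑ i ∈ t, g i).re = ∑ i ∈ t, (g i).re :=
  map_sum (QuaternionAlgebra.reₗ _ _ _) g t

theorem sum_sum_single {N S : ℕ} (H : Fin N → Fin S → ℍ[ℝ]) :
    ∑ n, ∑ s, single n s (H n s) = H := by
  simp only [single, ← AddMonoidHom.single_apply, ← map_sum]
  simp only [AddMonoidHom.single_apply, Finset.univ_sum_single]

theorem eq_re_smul_one_add_imI_smul_qI (h : ℍ[ℝ]) :
    h = h.re • 1 + h.imI • qI + h.imJ • qJ + h.imK • qK := by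
  ext <;> simp [Quaternion.re_smul] <;> simp [qI, qJ, qK]

theorem linearMap_apply_eq_re_mul (L : ℍ[ℝ] →ₗ[ℝ] ℝ) (h : ℍ[ℝ]) :
    L h = ((L 1 • 1 - L qI • qI - L qJ • qJ - L qK • qK) * h).re := by
  conv_lhs => rw [eq_re_smul_one_add_imI_smul_qI h]
  simp [Quaternion.re_mul, Quaternion.re_smul]
  simp [qI, qJ, qK]
  ring

theorem fderiv_single_eq_four_mul_re_ghrER {N S : ℕ} (f : (Fin N → Fin S → ℍ[ℝ]) → ℝ)
    (Q : Fin N → Fin S → ℍ[ℝ]) (n : Fin N) (s : Fin S) (h : ℍ[ℝ]) :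
    fderiv ℝ f Q (single n s h) = 4 * (ghrER 1 f Q n s * h).re := by
  let L : ℍ[ℝ] →ₗ[ℝ] ℝ := (fderiv ℝ f Q).toLinearMap ∘ₗ
    (LinearMap.single ℝ _ n ∘ₗ LinearMap.single ℝ (fun _ : Fin S ↦ ℍ[ℝ]) s)
  have h4 : (4 : ℝ) • ghrER 1 f Q n s = L 1 • 1 - L qI • qI - L qJ • qJ - L qK • qK := by
    rw [ghrER, smul_smul, show (4 : ℝ) * (1 / 4) = 1 by norm_num, one_smul]
    simp only [one_mul, inv_one, mul_one]
    rfl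
  calc fderiv ℝ f Q (single n s h) = L h := rfl
    _ = ((4 : ℝ) • ghrER 1 f Q n s * h).re := by rw [h4]; exact linearMap_apply_eq_re_mul L h
    _ = 4 * (ghrER 1 f Q n s * h).re := by rw [smul_mul_assoc, Quaternion.re_smul, smul_eq_mul]

theorem star_ghrStarER_one {N S : ℕ} (f : (Fin N → Fin S → ℍ[ℝ]) → ℝ)
    (Q : Fin N → Fin S → ℍ[ℝ]) (n : Fin N) (s : Fin S) :
    star (ghrStarER 1 f Q n s) = ghrER 1 f Q n s := by
  simp only [ghrStarER, ghrER, one_mul, inv_one, mul_one]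
  ext <;> simp [Quaternion.star_smul] <;> simp [qI, qJ, qK]

theorem fderiv_eq_ghr_re_sum_general {N S : ℕ}
    (f : (Fin N → Fin S → ℍ[ℝ]) → ℝ) (Q : Fin N → Fin S → ℍ[ℝ]) :
    ∀ H : Fin N → Fin S → ℍ[ℝ],
      fderiv ℝ f Q H = 4 * (∑ n, ∑ s, ghrER (1 : ℍ[ℝ]) f Q n s * H n s).re
      ∧ fderiv ℝ f Q H = 4 * (∑ n, ∑ s, star (ghrStarER (1 : ℍ[ℝ]) f Q n s) * H n s).re := by
  intro H
  have hghr : fderiv ℝ f Q H = 4 * (∑ n, ∑ s, ghrER 1 f Q n s * H n s).re := by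
    conv_lhs => rw [← sum_sum_single H]
    simp only [map_sum, fderiv_single_eq_four_mul_re_ghrER, Quaternion.re_sum, Finset.mul_sum]
  exact ⟨hghr, by simpa only [star_ghrStarER_one] using hghr⟩

/-- **The differential of a real-valued function via GHR derivatives** (basis of Theorem 4):
for `f : ℍ^{N×S} → ℝ` differentiable at `Q` and any direction `H`,
`Df(Q)[H] = 4 Re(Σ_{n,s} (∂f/∂q_{ns}) H_{ns}) = 4 Re(Σ_{n,s} (∂f/∂q_{ns}^*)^* H_{ns})`. -/
theorem fderiv_eq_ghr_re_sum {N S : ℕ}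
    (f : (Fin N → Fin S → ℍ[ℝ]) → ℝ) (Q : Fin N → Fin S → ℍ[ℝ])
    (hf : DifferentiableAt ℝ f Q) :
    ∀ H : Fin N → Fin S → ℍ[ℝ],
      fderiv ℝ f Q H = 4 * (∑ n, ∑ s, ghrER (1 : ℍ[ℝ]) f Q n s * H n s).re
      ∧ fderiv ℝ f Q H = 4 * (∑ n, ∑ s, star (ghrStarER (1 : ℍ[ℝ]) f Q n s) * H n s).re :=
  fderiv_eq_ghr_re_sum_general f Q
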